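/- arXiv:0706.3810 — 2 statements merged into one kernel-verified Lean document; each statement's English description precedes it below -/
import Mathlib

section
/- Compatibility of the Lax pair yields CH: if Ψ_xx = (1/4 + λ(m+ω))Ψ and Ψ_t = (1/(2λ) - u)Ψ_x + (u_x/2)Ψ + γΨ hold for smooth Ψ nonvanishing, with m = u - u_xx, then equality of mixed partials Ψ_xxt = Ψ_txx forces m_t + 2u_x m + u m_x + 2ω u_x = 0. -/
/-- Partial derivative in the first (space) variable. -/
noncomputable def pX (f : ℝ → ℝ → ℝ) (x t : ℝ) : ℝ := deriv (fun y => f y t) x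

/-- Partial derivative in the second (time) variable. -/
noncomputable def pT (f : ℝ → ℝ → ℝ) (x t : ℝ) : ℝ := deriv (fun s => f x s) t


section helpers

variable {f : ℝ → ℝ → ℝ}

lemma pX_eq_fderiv (hf : ContDiff ℝ (⊤ : ℕ∞) (fun p : ℝ × ℝ => f p.1 p.2)) (x t : ℝ) :
    pX f x t = fderiv ℝ (fun p : ℝ × ℝ => f p.1 p.2) (x, t) (1, 0) := by
  have h : HasDerivAt (fun y => f y t)
      (fderiv ℝ (fun p : ℝ × ℝ => f p.1 p.2) (x, t) (1, 0)) x := by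
    have h1 : HasFDerivAt (fun p : ℝ × ℝ => f p.1 p.2)
        (fderiv ℝ (fun p : ℝ × ℝ => f p.1 p.2) (x, t)) (x, t) :=
      ((hf.differentiable (by simp)) (x, t)).hasFDerivAt
    have h2 : HasDerivAt (fun y : ℝ => (y, t)) ((1 : ℝ), (0 : ℝ)) x :=
      (hasDerivAt_id x).prodMk (hasDerivAt_const x t)
    exact h1.comp_hasDerivAt x h2
  exact h.deriv

lemma pT_eq_fderiv (hf : ContDiff ℝ (⊤ : ℕ∞) (fun p : ℝ × ℝ => f p.1 p.2)) (x t : ℝ) :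
    pT f x t = fderiv ℝ (fun p : ℝ × ℝ => f p.1 p.2) (x, t) (0, 1) := by
  have h : HasDerivAt (fun s => f x s)
      (fderiv ℝ (fun p : ℝ × ℝ => f p.1 p.2) (x, t) (0, 1)) t := by
    have h1 : HasFDerivAt (fun p : ℝ × ℝ => f p.1 p.2)
        (fderiv ℝ (fun p : ℝ × ℝ => f p.1 p.2) (x, t)) (x, t) :=
      ((hf.differentiable (by simp)) (x, t)).hasFDerivAt
    have h2 : HasDerivAt (fun s : ℝ => (x, s)) ((0 : ℝ), (1 : ℝ)) t :=
      (hasDerivAt_const t x).prodMk (hasDerivAt_id t)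
    exact h1.comp_hasDerivAt t h2
  exact h.deriv

lemma hasDerivAt_pX (hf : ContDiff ℝ (⊤ : ℕ∞) (fun p : ℝ × ℝ => f p.1 p.2)) (x t : ℝ) :
    HasDerivAt (fun y => f y t) (pX f x t) x := by
  rw [pX_eq_fderiv hf]
  have h1 : HasFDerivAt (fun p : ℝ × ℝ => f p.1 p.2)
      (fderiv ℝ (fun p : ℝ × ℝ => f p.1 p.2) (x, t)) (x, t) :=
    ((hf.differentiable (by simp)) (x, t)).hasFDerivAt
  exact h1.comp_hasDerivAt x ((hasDerivAt_id x).prodMk (hasDerivAt_const x t))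

lemma hasDerivAt_pT (hf : ContDiff ℝ (⊤ : ℕ∞) (fun p : ℝ × ℝ => f p.1 p.2)) (x t : ℝ) :
    HasDerivAt (fun s => f x s) (pT f x t) t := by
  rw [pT_eq_fderiv hf]
  have h1 : HasFDerivAt (fun p : ℝ × ℝ => f p.1 p.2)
      (fderiv ℝ (fun p : ℝ × ℝ => f p.1 p.2) (x, t)) (x, t) :=
    ((hf.differentiable (by simp)) (x, t)).hasFDerivAt
  exact h1.comp_hasDerivAt t ((hasDerivAt_const t x).prodMk (hasDerivAt_id t))

lemma contDiff_fderiv_apply (hf : ContDiff ℝ (⊤ : ℕ∞) (fun p : ℝ × ℝ => f p.1 p.2)) (v : ℝ × ℝ) :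
    ContDiff ℝ (⊤ : ℕ∞) (fun p : ℝ × ℝ => fderiv ℝ (fun q : ℝ × ℝ => f q.1 q.2) p v) :=
  (hf.fderiv_right (by simp)).clm_apply contDiff_const

lemma contDiff_pX (hf : ContDiff ℝ (⊤ : ℕ∞) (fun p : ℝ × ℝ => f p.1 p.2)) :
    ContDiff ℝ (⊤ : ℕ∞) (fun p : ℝ × ℝ => pX f p.1 p.2) := by
  have h1 : (fun p : ℝ × ℝ => pX f p.1 p.2)
      = fun p : ℝ × ℝ => fderiv ℝ (fun q : ℝ × ℝ => f q.1 q.2) p (1, 0) := by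
    funext p
    rw [pX_eq_fderiv hf]
  rw [h1]
  exact contDiff_fderiv_apply hf _

lemma hasFDerivAt_fderiv_apply (hf : ContDiff ℝ (⊤ : ℕ∞) (fun p : ℝ × ℝ => f p.1 p.2))
    (q : ℝ × ℝ) (v : ℝ × ℝ) :
    HasFDerivAt (fun p : ℝ × ℝ => fderiv ℝ (fun r : ℝ × ℝ => f r.1 r.2) p v)
      ((ContinuousLinearMap.apply ℝ ℝ v).comp
        (fderiv ℝ (fderiv ℝ (fun r : ℝ × ℝ => f r.1 r.2)) q)) q := by
  have h1 : HasFDerivAt (fderiv ℝ (fun r : ℝ × ℝ => f r.1 r.2))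
      (fderiv ℝ (fderiv ℝ (fun r : ℝ × ℝ => f r.1 r.2)) q) q :=
    (((hf.fderiv_right (m := (⊤ : ℕ∞)) (by simp)).differentiable (by simp)) q).hasFDerivAt
  exact (ContinuousLinearMap.apply ℝ ℝ v).hasFDerivAt.comp q h1

lemma clairaut (hf : ContDiff ℝ (⊤ : ℕ∞) (fun p : ℝ × ℝ => f p.1 p.2)) (x t : ℝ) :
    pT (pX f) x t = pX (pT f) x t := by
  set F : ℝ × ℝ → ℝ := fun p => f p.1 p.2 with hF
  have hsymm : ∀ v w : ℝ × ℝ,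
      fderiv ℝ (fderiv ℝ F) (x, t) v w = fderiv ℝ (fderiv ℝ F) (x, t) w v := by
    intro v w
    exact second_derivative_symmetric
      (fun y => ((hf.differentiable (by simp)) y).hasFDerivAt)
      ((((hf.fderiv_right (m := (⊤ : ℕ∞)) (by simp)).differentiable (by simp)) (x, t)).hasFDerivAt) v w
  have hX : ContDiff ℝ (⊤ : ℕ∞) (fun p : ℝ × ℝ => pX f p.1 p.2) := contDiff_pX hf
  have hT : ContDiff ℝ (⊤ : ℕ∞) (fun p : ℝ × ℝ => pT f p.1 p.2) := by
    have h1 : (fun p : ℝ × ℝ => pT f p.1 p.2)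
        = fun p : ℝ × ℝ => fderiv ℝ F p (0, 1) := by
      funext p; rw [pT_eq_fderiv hf]
    rw [h1]; exact contDiff_fderiv_apply hf _
  have e1 : pT (pX f) x t = fderiv ℝ (fderiv ℝ F) (x, t) (0, 1) (1, 0) := by
    have h2 : pT (pX f) x t
        = fderiv ℝ (fun p : ℝ × ℝ => pX f p.1 p.2) (x, t) (0, 1) :=
      pT_eq_fderiv hX x t
    have h3 : (fun p : ℝ × ℝ => pX f p.1 p.2) = fun p : ℝ × ℝ => fderiv ℝ F p (1, 0) := by
      funext p; rw [pX_eq_fderiv hf]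
    rw [h2, h3, (hasFDerivAt_fderiv_apply hf (x, t) (1, 0)).fderiv]
    rfl
  have e2 : pX (pT f) x t = fderiv ℝ (fderiv ℝ F) (x, t) (1, 0) (0, 1) := by
    have h2 : pX (pT f) x t
        = fderiv ℝ (fun p : ℝ × ℝ => pT f p.1 p.2) (x, t) (1, 0) :=
      pX_eq_fderiv hT x t
    have h3 : (fun p : ℝ × ℝ => pT f p.1 p.2) = fun p : ℝ × ℝ => fderiv ℝ F p (0, 1) := by
      funext p; rw [pT_eq_fderiv hf]
    rw [h2, h3, (hasFDerivAt_fderiv_apply hf (x, t) (0, 1)).fderiv]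
    rfl
  rw [e1, e2, hsymm]

end helpers
theorem lax_pair_compatibility_gives_CH
    (u m Ψ : ℝ → ℝ → ℝ) (lam ω γ : ℝ) (hlam : lam ≠ 0)
    (hu : ContDiff ℝ (⊤ : ℕ∞) (fun p : ℝ × ℝ => u p.1 p.2))
    (hΨ : ContDiff ℝ (⊤ : ℕ∞) (fun p : ℝ × ℝ => Ψ p.1 p.2))
    (hΨne : ∀ x t, Ψ x t ≠ 0)
    (hm : ∀ x t, m x t = u x t - pX (pX u) x t)
    (lax1 : ∀ x t, pX (pX Ψ) x t = (1 / 4 + lam * (m x t + ω)) * Ψ x t)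
    (lax2 : ∀ x t, pT Ψ x t
        = (1 / (2 * lam) - u x t) * pX Ψ x t + (pX u x t / 2) * Ψ x t + γ * Ψ x t) :
    ∀ x t, pT u x t - pT (pX (pX u)) x t + 2 * ω * pX u x t
        + 3 * u x t * pX u x t - 2 * pX u x t * pX (pX u) x t
        - u x t * pX (pX (pX u)) x t = 0 := by
  have hux : ContDiff ℝ (⊤ : ℕ∞) (fun p : ℝ × ℝ => pX u p.1 p.2) := contDiff_pX hu
  have huxx : ContDiff ℝ (⊤ : ℕ∞) (fun p : ℝ × ℝ => pX (pX u) p.1 p.2) := contDiff_pX hux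
  have hΨx : ContDiff ℝ (⊤ : ℕ∞) (fun p : ℝ × ℝ => pX Ψ p.1 p.2) := contDiff_pX hΨ
  have lax1' : ∀ y s, pX (pX Ψ) y s
      = (1 / 4 + lam * (u y s - pX (pX u) y s + ω)) * Ψ y s := by
    intro y s; rw [lax1, hm]
  intro x t
  -- Step 1: first x-derivative of lax2
  have e1 : ∀ y, pX (pT Ψ) y t
      = -(pX u y t) * pX Ψ y t
        + (1 / (2 * lam) - u y t)
            * ((1 / 4 + lam * (u y t - pX (pX u) y t + ω)) * Ψ y t)
        + (pX (pX u) y t / 2 * Ψ y t + pX u y t / 2 * pX Ψ y t)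
        + γ * pX Ψ y t := by
    intro y
    have H : HasDerivAt
        (fun z => (1 / (2 * lam) - u z t) * pX Ψ z t + pX u z t / 2 * Ψ z t + γ * Ψ z t)
        (((0 - pX u y t) * pX Ψ y t + (1 / (2 * lam) - u y t) * pX (pX Ψ) y t)
          + (pX (pX u) y t / 2 * Ψ y t + pX u y t / 2 * pX Ψ y t)
          + (γ * pX Ψ y t)) y := by
      exact ((((hasDerivAt_const y (1 / (2 * lam))).sub (hasDerivAt_pX hu y t)).mul
          (hasDerivAt_pX hΨx y t)).add
        (((hasDerivAt_pX hux y t).div_const 2).mul (hasDerivAt_pX hΨ y t))).add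
        ((hasDerivAt_pX hΨ y t).const_mul γ)
    have hfun : (fun z => pT Ψ z t)
        = fun z => (1 / (2 * lam) - u z t) * pX Ψ z t + pX u z t / 2 * Ψ z t + γ * Ψ z t := by
      funext z; rw [lax2]
    show deriv (fun z => pT Ψ z t) y = _
    rw [hfun, H.deriv, lax1' y t]
    ring
  -- Step 2: second x-derivative
  have e2 : pX (pX (pT Ψ)) x t
      = -(pX (pX u) x t) * pX Ψ x t
        - 2 * pX u x t * ((1 / 4 + lam * (u x t - pX (pX u) x t + ω)) * Ψ x t)
        + (1 / (2 * lam) - u x t)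
            * (lam * (pX u x t - pX (pX (pX u)) x t) * Ψ x t
              + (1 / 4 + lam * (u x t - pX (pX u) x t + ω)) * pX Ψ x t)
        + (pX (pX (pX u)) x t / 2 * Ψ x t + pX (pX u) x t / 2 * pX Ψ x t)
        + (pX (pX u) x t / 2 * pX Ψ x t
            + pX u x t / 2 * ((1 / 4 + lam * (u x t - pX (pX u) x t + ω)) * Ψ x t))
        + γ * ((1 / 4 + lam * (u x t - pX (pX u) x t + ω)) * Ψ x t) := by
    have hU := hasDerivAt_pX hu x t
    have hU1 := hasDerivAt_pX hux x t
    have hU2 := hasDerivAt_pX huxx x t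
    have hP := hasDerivAt_pX hΨ x t
    have hP1 := hasDerivAt_pX hΨx x t
    have H : HasDerivAt
        (fun z => -(pX u z t) * pX Ψ z t
          + (1 / (2 * lam) - u z t)
              * ((1 / 4 + lam * (u z t - pX (pX u) z t + ω)) * Ψ z t)
          + (pX (pX u) z t / 2 * Ψ z t + pX u z t / 2 * pX Ψ z t)
          + γ * pX Ψ z t)
        ((-(pX (pX u) x t) * pX Ψ x t + -(pX u x t) * pX (pX Ψ) x t)
          + ((0 - pX u x t) * ((1 / 4 + lam * (u x t - pX (pX u) x t + ω)) * Ψ x t)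
            + (1 / (2 * lam) - u x t)
                * ((0 + lam * (pX u x t - pX (pX (pX u)) x t)) * Ψ x t
                  + (1 / 4 + lam * (u x t - pX (pX u) x t + ω)) * pX Ψ x t))
          + (pX (pX (pX u)) x t / 2 * Ψ x t + pX (pX u) x t / 2 * pX Ψ x t
            + (pX (pX u) x t / 2 * pX Ψ x t + pX u x t / 2 * pX (pX Ψ) x t))
          + γ * pX (pX Ψ) x t) x := by
      exact (((hU1.neg.mul hP1).add
          (((hasDerivAt_const x (1 / (2 * lam))).sub hU).mul
            (((hasDerivAt_const x ((1:ℝ) / 4)).add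
              (((hU.sub hU2).add_const ω).const_mul lam)).mul hP))).add
        (((hU2.div_const 2).mul hP).add ((hU1.div_const 2).mul hP1))).add
        (hP1.const_mul γ)
    have hfun : (fun z => pX (pT Ψ) z t)
        = fun z => -(pX u z t) * pX Ψ z t
          + (1 / (2 * lam) - u z t)
              * ((1 / 4 + lam * (u z t - pX (pX u) z t + ω)) * Ψ z t)
          + (pX (pX u) z t / 2 * Ψ z t + pX u z t / 2 * pX Ψ z t)
          + γ * pX Ψ z t := by
      funext z; rw [e1]
    show deriv (fun z => pX (pT Ψ) z t) x = _
    rw [hfun, H.deriv, lax1' x t]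
    ring
  -- Step 3: t-derivative of lax1
  have e3 : pT (pX (pX Ψ)) x t
      = lam * (pT u x t - pT (pX (pX u)) x t) * Ψ x t
        + (1 / 4 + lam * (u x t - pX (pX u) x t + ω))
            * ((1 / (2 * lam) - u x t) * pX Ψ x t + pX u x t / 2 * Ψ x t + γ * Ψ x t) := by
    have H : HasDerivAt
        (fun s => (1 / 4 + lam * (u x s - pX (pX u) x s + ω)) * Ψ x s)
        ((0 + lam * (pT u x t - pT (pX (pX u)) x t))
            * Ψ x t
          + (1 / 4 + lam * (u x t - pX (pX u) x t + ω)) * pT Ψ x t) t := by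
      exact ((hasDerivAt_const t ((1:ℝ) / 4)).add
        ((((hasDerivAt_pT hu x t).sub (hasDerivAt_pT huxx x t)).add_const ω).const_mul
          lam)).mul (hasDerivAt_pT hΨ x t)
    have hfun : (fun s => pX (pX Ψ) x s)
        = fun s => (1 / 4 + lam * (u x s - pX (pX u) x s + ω)) * Ψ x s := by
      funext s; rw [lax1' x s]
    show deriv (fun s => pX (pX Ψ) x s) t = _
    rw [hfun, H.deriv, lax2 x t]
    ring
  -- Clairaut
  have key : pT (pX (pX Ψ)) x t = pX (pX (pT Ψ)) x t := by
    rw [clairaut hΨx x t]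
    have hfun : pT (pX Ψ) = pX (pT Ψ) := by
      funext a b; exact clairaut hΨ a b
    rw [hfun]
  have h := (e3.symm.trans (key.trans e2))
  have hk : 1 / (2 * lam) * lam = 1 / 2 := by field_simp
  have h4 : lam * (pT u x t - pT (pX (pX u)) x t + 2 * ω * pX u x t
        + 3 * u x t * pX u x t - 2 * pX u x t * pX (pX u) x t
        - u x t * pX (pX (pX u)) x t) * Ψ x t = 0 := by
    linear_combination h + ((pX u x t - pX (pX (pX u)) x t) * Ψ x t) * hk
  have h5 := (mul_eq_zero.mp h4).resolve_right (hΨne x t)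
  have h6 := (mul_eq_zero.mp h5).resolve_left hlam
  exact h6
end

section
/- A peaked traveling wave u(x,t) = c e^{-|x-ct|} satisfies the Camassa–Holm equation with ω = 0 in the weak/distributional sense: for m = u - u_xx = 2c δ(x - ct), the equation m_t + u m_x + 2u_x m = 0 holds distributionally. -/
open MeasureTheory Real Set

lemma integ_exp_neg_abs : Integrable (fun s : ℝ => Real.exp (-|s|)) := by
  rw [← integrableOn_univ, ← Iic_union_Ioi (a := (0:ℝ))]
  apply IntegrableOn.union
  · exact (integrableOn_exp_Iic 0).congr_fun
      (fun s hs => by rw [abs_of_nonpos hs, neg_neg]) measurableSet_Iic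
  · exact (exp_neg_integrableOn_Ioi 0 one_pos).congr_fun
      (fun s hs => by rw [abs_of_pos hs]; ring_nf) measurableSet_Ioi

lemma integ_f (a : ℝ) : Integrable (fun s : ℝ => Real.exp (-|a - s|) * Real.exp (-(2*|s|))) := by
  apply integ_exp_neg_abs.mono
  · exact (Continuous.mul (by continuity) (by continuity)).aestronglyMeasurable
  · refine ae_of_all _ fun s => ?_
    rw [Real.norm_eq_abs, Real.norm_eq_abs, abs_of_pos (by positivity),
      abs_of_pos (Real.exp_pos _)]
    calc Real.exp (-|a - s|) * Real.exp (-(2*|s|))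
        ≤ 1 * Real.exp (-(2*|s|)) := by
          gcongr; exact Real.exp_le_one_iff.mpr (by simp [abs_nonneg])
      _ ≤ Real.exp (-|s|) := by
          rw [one_mul]; exact Real.exp_le_exp.mpr (by nlinarith [abs_nonneg s])

lemma exp3Iic : ∫ s : ℝ in Iic 0, Real.exp (3*s) = 3⁻¹ := by
  have h1 : ∫ s : ℝ in Iic (0:ℝ), Real.exp (3*s)
      = ∫ s : ℝ in Ioi (-(0:ℝ)), Real.exp (-(3*s)) := by
    rw [← integral_comp_neg_Iic (0:ℝ) (fun x => Real.exp (-(3*x)))]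
    refine setIntegral_congr_fun measurableSet_Iic fun s _ => by ring_nf
  rw [h1, neg_zero]
  have h2 := integral_comp_mul_left_Ioi (fun x => Real.exp (-x)) 0 (b := 3) (by norm_num)
  simp only [mul_zero] at h2
  simp only [← neg_mul, mul_comm] at h2 ⊢
  rw [h2, integral_exp_neg_Ioi]
  norm_num

lemma exp3Ioi (a : ℝ) : ∫ s : ℝ in Ioi a, Real.exp (-(3*s)) = 3⁻¹ * Real.exp (-(3*a)) := by
  have h2 := integral_comp_mul_left_Ioi (fun x => Real.exp (-x)) a (b := 3) (by norm_num)
  rw [h2, integral_exp_neg_Ioi, smul_eq_mul]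

lemma keyK_nonneg (a : ℝ) (ha : 0 ≤ a) :
    ∫ s : ℝ, Real.exp (-|a - s|) * Real.exp (-(2*|s|))
      = 4/3 * Real.exp (-a) - 2/3 * Real.exp (-(2*a)) := by
  set f : ℝ → ℝ := fun s => Real.exp (-|a - s|) * Real.exp (-(2*|s|)) with hf
  have hfi := integ_f a
  have hsplit : (∫ s, f s) = (∫ s in Iic a, f s) + ∫ s in Ioi a, f s :=
    (intervalIntegral.integral_Iic_add_Ioi hfi.integrableOn hfi.integrableOn).symm
  have hIic : (∫ s in Iic a, f s) = (∫ s in Iic 0, f s) + ∫ s in (0:ℝ)..a, f s := by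
    have := intervalIntegral.integral_Iic_sub_Iic (μ := volume) (f := f) (a := (0:ℝ)) (b := a)
      hfi.integrableOn hfi.integrableOn
    linarith [this]
  -- piece 1
  have p1 : (∫ s in Iic (0:ℝ), f s) = Real.exp (-a) * 3⁻¹ := by
    have : (∫ s in Iic (0:ℝ), f s) = ∫ s in Iic (0:ℝ), Real.exp (-a) * Real.exp (3*s) := by
      refine setIntegral_congr_fun measurableSet_Iic fun s hs => ?_
      simp only [mem_Iic] at hs
      rw [hf]
      simp only
      rw [abs_of_nonneg (by linarith), abs_of_nonpos hs, ← Real.exp_add, ← Real.exp_add]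
      ring_nf
    rw [this, integral_const_mul, exp3Iic]
  -- piece 2
  have p2 : (∫ s in (0:ℝ)..a, f s) = Real.exp (-a) * (1 - Real.exp (-a)) := by
    have : (∫ s in (0:ℝ)..a, f s) = ∫ s in (0:ℝ)..a, Real.exp (-a) * Real.exp (-s) := by
      refine intervalIntegral.integral_congr fun s hs => ?_
      rw [uIcc_of_le ha] at hs
      obtain ⟨h0, h1⟩ := hs
      rw [hf]
      simp only
      rw [abs_of_nonneg (by linarith), abs_of_nonneg h0, ← Real.exp_add, ← Real.exp_add]
      ring_nf
    rw [this, intervalIntegral.integral_const_mul]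
    have : (∫ s in (0:ℝ)..a, Real.exp (-s)) = ∫ s in -a..(-0:ℝ), Real.exp s := by
      rw [← intervalIntegral.integral_comp_neg fun s => Real.exp s]
    rw [this, integral_exp]
    simp
  -- piece 3
  have p3 : (∫ s in Ioi a, f s) = Real.exp a * (3⁻¹ * Real.exp (-(3*a))) := by
    have : (∫ s in Ioi a, f s) = ∫ s in Ioi a, Real.exp a * Real.exp (-(3*s)) := by
      refine setIntegral_congr_fun measurableSet_Ioi fun s hs => ?_
      simp only [mem_Ioi] at hs
      rw [hf]
      simp only
      rw [abs_of_nonpos (by linarith), abs_of_nonneg (by linarith), ← Real.exp_add, ← Real.exp_add]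
      ring_nf
    rw [this, integral_const_mul, exp3Ioi]
  have e2 : Real.exp (-(2*a)) = Real.exp (-a) * Real.exp (-a) := by
    rw [← Real.exp_add]; norm_num; ring_nf
  have e3 : Real.exp a * Real.exp (-(3*a)) = Real.exp (-a) * Real.exp (-a) := by
    rw [← Real.exp_add, ← Real.exp_add]; norm_num; ring_nf
  rw [hsplit, hIic, p1, p2, p3, e2]
  linear_combination (3⁻¹ : ℝ) * e3



lemma keyK (a : ℝ) :
    ∫ s : ℝ, Real.exp (-|a - s|) * Real.exp (-(2*|s|))
      = 4/3 * Real.exp (-|a|) - 2/3 * Real.exp (-(2*|a|)) := by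
  rcases le_or_gt 0 a with ha | ha
  · rw [abs_of_nonneg ha]; exact keyK_nonneg a ha
  · have h := keyK_nonneg (-a) (by linarith)
    rw [abs_of_neg ha]
    rw [← integral_neg_eq_self (fun s => Real.exp (-|a - s|) * Real.exp (-(2*|s|)))] 
    rw [show (fun s : ℝ => Real.exp (-|a - -s|) * Real.exp (-(2*|(-s)|)))
        = fun s : ℝ => Real.exp (-|(-a) - s|) * Real.exp (-(2*|s|)) from by
      funext s
      rw [abs_neg, show a - -s = -((-a) - s) from by ring, abs_neg]]
    exact h

-- derivative of peakon squared, a.e.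
lemma peak_deriv_sq (c b : ℝ) {y : ℝ} (hy : y ≠ b) :
    (deriv (fun z => c * Real.exp (-|z - b|)) y) ^ 2
      = c^2 * Real.exp (-(2*|y - b|)) := by
  rcases lt_or_gt_of_ne hy with h | h
  · have hev : (fun z => c * Real.exp (-|z - b|)) =ᶠ[nhds y] fun z => c * Real.exp (z - b) := by
      filter_upwards [IsOpen.mem_nhds isOpen_Iio (show y ∈ Iio b from h)] with z hz
      rw [abs_of_neg (by simpa using hz), neg_neg]
    have hd : HasDerivAt (fun z => c * Real.exp (z - b)) (c * Real.exp (y - b)) y := by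
      have h1 : HasDerivAt (fun z : ℝ => z - b) 1 y := (hasDerivAt_id y).sub_const b
      have := (h1.exp).const_mul c
      simpa using this
    rw [hev.deriv_eq, hd.deriv, abs_of_neg (by simpa using sub_neg.mpr h)]
    rw [mul_pow, ← Real.exp_nat_mul]
    norm_num
    exact Or.inl (by ring)
  · have hev : (fun z => c * Real.exp (-|z - b|)) =ᶠ[nhds y] fun z => c * Real.exp (b - z) := by
      filter_upwards [IsOpen.mem_nhds isOpen_Ioi (show y ∈ Ioi b from h)] with z hz
      rw [abs_of_pos (by simpa using hz)]
      ring_nf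
    have hd : HasDerivAt (fun z => c * Real.exp (b - z)) (-(c * Real.exp (b - y))) y := by
      have h1 : HasDerivAt (fun z : ℝ => b - z) (-1) y := (hasDerivAt_id y).const_sub b
      have := (h1.exp).const_mul c
      simpa using this
    rw [hev.deriv_eq, hd.deriv, abs_of_pos (by simpa using sub_pos.mpr h)]
    rw [neg_pow, mul_pow, ← Real.exp_nat_mul]
    norm_num
    exact Or.inl (by ring)





lemma sq_exp (t : ℝ) : (Real.exp t)^2 = Real.exp (2*t) := by
  rw [← Real.exp_nat_mul]; norm_num

lemma Pval (c b x : ℝ) :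
    ∫ y : ℝ, (1/2) * Real.exp (-|x - y|) *
        ((c * Real.exp (-|y - b|))^2 + (deriv (fun z => c * Real.exp (-|z - b|)) y)^2 / 2)
      = c^2 * Real.exp (-|x - b|) - c^2/2 * Real.exp (-(2*|x - b|)) := by
  have hae : (fun y : ℝ => (1/2) * Real.exp (-|x - y|) *
        ((c * Real.exp (-|y - b|))^2 + (deriv (fun z => c * Real.exp (-|z - b|)) y)^2 / 2))
      =ᵐ[volume] fun y : ℝ =>
        (3/4*c^2) * (Real.exp (-|x - y|) * Real.exp (-(2*|y - b|))) := by
    have hne : ∀ᵐ y : ℝ, y ≠ b := by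
      rw [ae_iff]
      simp [Set.setOf_eq_eq_singleton]
    filter_upwards [hne] with y hy
    rw [peak_deriv_sq c b hy, mul_pow, sq_exp,
      show 2 * -|y - b| = -(2*|y - b|) from by ring]
    ring
  rw [integral_congr_ae hae, integral_const_mul,
    ← integral_add_right_eq_self (fun y => Real.exp (-|x - y|) * Real.exp (-(2*|y - b|))) b]
  rw [show (fun s : ℝ => Real.exp (-|x - (s + b)|) * Real.exp (-(2*|s + b - b|)))
      = fun s : ℝ => Real.exp (-|(x - b) - s|) * Real.exp (-(2*|s|)) from by
    funext s
    rw [show x - (s + b) = (x - b) - s from by ring, add_sub_cancel_right]]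
  rw [keyK (x - b)]
  ring





theorem peakon_is_weak_solution
    (c : ℝ) :
    let u : ℝ → ℝ → ℝ := fun x t => c * Real.exp (-|x - c * t|)
    let P : ℝ → ℝ → ℝ := fun x t =>
      ∫ y : ℝ, (1 / 2) * Real.exp (-|x - y|) *
        (u y t ^ 2 + (deriv (fun z => u z t) y) ^ 2 / 2)
    ∀ φ : ℝ → ℝ → ℝ,
      ContDiff ℝ (⊤ : ℕ∞) (fun p : ℝ × ℝ => φ p.1 p.2) →
      HasCompactSupport (fun p : ℝ × ℝ => φ p.1 p.2) →
      ∫ t : ℝ, ∫ x : ℝ,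
        (u x t * deriv (fun s => φ x s) t
          + (u x t ^ 2 / 2 + P x t) * deriv (fun y => φ y t) x) = 0 := by
  intro u P φ hφ hsupp
  set Φ : ℝ × ℝ → ℝ := fun p => φ p.1 p.2 with hΦdef
  have hdiff : Differentiable ℝ Φ := hφ.differentiable (by simp)
  -- partial derivatives
  have hderivx : ∀ x t : ℝ, HasDerivAt (fun y => φ y t) (fderiv ℝ Φ (x, t) (1, 0)) x := by
    intro x t
    have hcurve : HasDerivAt (fun y : ℝ => ((y, t) : ℝ × ℝ)) ((1:ℝ), (0:ℝ)) x :=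
      (hasDerivAt_id x).prodMk (hasDerivAt_const x t)
    exact (hdiff (x, t)).hasFDerivAt.comp_hasDerivAt x hcurve
  have hderivt : ∀ x t : ℝ, HasDerivAt (fun s => φ x s) (fderiv ℝ Φ (x, t) (0, 1)) t := by
    intro x t
    have hcurve : HasDerivAt (fun s : ℝ => ((x, s) : ℝ × ℝ)) ((0:ℝ), (1:ℝ)) t :=
      (hasDerivAt_const t x).prodMk (hasDerivAt_id t)
    exact (hdiff (x, t)).hasFDerivAt.comp_hasDerivAt t hcurve
  have hderivg : ∀ y t : ℝ, HasDerivAt (fun s => Φ (y + c * s, s))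
      (fderiv ℝ Φ (y + c * t, t) (c, 1)) t := by
    intro y t
    have h1 : HasDerivAt (fun s : ℝ => y + c * s) c t := by
      simpa using ((hasDerivAt_id t).const_mul c).const_add y
    have hcurve : HasDerivAt (fun s : ℝ => ((y + c * s, s) : ℝ × ℝ)) ((c:ℝ), (1:ℝ)) t :=
      h1.prodMk (hasDerivAt_id t)
    exact (hdiff _).hasFDerivAt.comp_hasDerivAt t hcurve
  have hcomb : ∀ p : ℝ × ℝ, fderiv ℝ Φ p (c, 1)
      = c * fderiv ℝ Φ p (1, 0) + fderiv ℝ Φ p (0, 1) := by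
    intro p
    have h : ((c : ℝ), (1 : ℝ)) = c • ((1:ℝ), (0:ℝ)) + ((0:ℝ), (1:ℝ)) := by simp
    rw [h, map_add, _root_.map_smul, smul_eq_mul]
  -- Step 1: pointwise simplification of the inner integrand
  have step1 : ∀ t : ℝ, (∫ x : ℝ, (u x t * deriv (fun s => φ x s) t
        + (u x t ^ 2 / 2 + P x t) * deriv (fun y => φ y t) x))
      = ∫ x : ℝ, c * Real.exp (-|x - c * t|) * fderiv ℝ Φ (x, t) (c, 1) := by
    intro t
    congr 1
    funext x
    rw [(hderivt x t).deriv, (hderivx x t).deriv]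
    have hu : u x t = c * Real.exp (-|x - c * t|) := rfl
    have hP : P x t = c^2 * Real.exp (-|x - c * t|)
        - c^2/2 * Real.exp (-(2 * |x - c * t|)) := Pval c (c * t) x
    have hsq : u x t ^ 2 / 2 = c^2/2 * Real.exp (-(2 * |x - c * t|)) := by
      rw [hu, mul_pow, sq_exp, show 2 * -|x - c * t| = -(2 * |x - c * t|) from by ring]
      ring
    rw [hsq, hP, hu, hcomb]
    ring
  -- Step 2: translation x = y + c t
  have step2 : ∀ t : ℝ, (∫ x : ℝ, c * Real.exp (-|x - c * t|) * fderiv ℝ Φ (x, t) (c, 1))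
      = ∫ y : ℝ, c * Real.exp (-|y|) * fderiv ℝ Φ (y + c * t, t) (c, 1) := by
    intro t
    rw [← integral_add_right_eq_self
      (fun x : ℝ => c * Real.exp (-|x - c * t|) * fderiv ℝ Φ (x, t) (c, 1)) (c * t)]
    congr 1
    funext y
    rw [add_sub_cancel_right]
  -- the product function
  set F : ℝ × ℝ → ℝ := fun q => c * Real.exp (-|q.2|) * fderiv ℝ Φ (q.2 + c * q.1, q.1) (c, 1)
    with hFdef
  have hψ : Continuous (fun q : ℝ × ℝ => ((q.2 + c * q.1, q.1) : ℝ × ℝ)) := by fun_prop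
  have hFcont : Continuous F := by
    apply Continuous.mul
    · exact continuous_const.mul (by fun_prop)
    · exact (((hφ.continuous_fderiv (by simp)).comp hψ).clm_apply continuous_const)
  have hFsupp : HasCompactSupport F := by
    apply HasCompactSupport.intro
      (hsupp.image (f := fun p : ℝ × ℝ => ((p.2, p.1 - c * p.2) : ℝ × ℝ)) (by fun_prop))
    intro q hq
    have hz : fderiv ℝ Φ (q.2 + c * q.1, q.1) = 0 := by
      by_contra h
      apply hq
      refine ⟨(q.2 + c * q.1, q.1), support_fderiv_subset ℝ h, ?_⟩
      simp
    rw [hFdef]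
    simp only [hz, ContinuousLinearMap.zero_apply, mul_zero]
  have hFint : Integrable F (volume.prod volume) := by
    rw [← MeasureTheory.Measure.volume_eq_prod]
    exact hFcont.integrable_of_hasCompactSupport hFsupp
  -- Step 4: inner t-integral vanishes
  have step4 : ∀ y : ℝ, (∫ t : ℝ, F (t, y)) = 0 := by
    intro y
    have hg : ∀ t : ℝ, F (t, y) = c * Real.exp (-|y|) * deriv (fun s => Φ (y + c * s, s)) t := by
      intro t
      rw [(hderivg y t).deriv]
    have hgC : ContDiff ℝ 1 (fun s : ℝ => Φ (y + c * s, s)) := by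
      have hcurve : ContDiff ℝ (⊤ : ℕ∞) (fun s : ℝ => ((y + c * s, s) : ℝ × ℝ)) :=
        (contDiff_const.add (contDiff_const.mul contDiff_id)).prodMk contDiff_id
      exact (hφ.comp hcurve).of_le (by simp)
    have hgsupp : HasCompactSupport (fun s : ℝ => Φ (y + c * s, s)) := by
      apply HasCompactSupport.intro (hsupp.image continuous_snd)
      intro s hs
      by_contra h
      exact hs ⟨(y + c * s, s), subset_tsupport _ h, rfl⟩
    have hint : Integrable (deriv (fun s : ℝ => Φ (y + c * s, s))) :=
      (hgC.continuous_deriv le_rfl).integrable_of_hasCompactSupport hgsupp.deriv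
    have h1 := HasCompactSupport.integral_Iic_deriv_eq hgC hgsupp 0
    have h2 := HasCompactSupport.integral_Ioi_deriv_eq hgC hgsupp 0
    have hzero : (∫ t : ℝ, deriv (fun s : ℝ => Φ (y + c * s, s)) t) = 0 := by
      rw [← intervalIntegral.integral_Iic_add_Ioi hint.integrableOn hint.integrableOn, h1, h2]
      ring
    calc (∫ t : ℝ, F (t, y))
        = ∫ t : ℝ, c * Real.exp (-|y|) * deriv (fun s => Φ (y + c * s, s)) t :=
          integral_congr_ae (Filter.Eventually.of_forall hg)
      _ = c * Real.exp (-|y|) * ∫ t : ℝ, deriv (fun s => Φ (y + c * s, s)) t :=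
          integral_const_mul _ _
      _ = 0 := by rw [hzero, mul_zero]
  calc (∫ t : ℝ, ∫ x : ℝ, (u x t * deriv (fun s => φ x s) t
        + (u x t ^ 2 / 2 + P x t) * deriv (fun y => φ y t) x))
      = ∫ t : ℝ, ∫ y : ℝ, F (t, y) :=
        integral_congr_ae (Filter.Eventually.of_forall fun t => (step1 t).trans (step2 t))
    _ = ∫ y : ℝ, ∫ t : ℝ, F (t, y) := integral_integral_swap hFint
    _ = ∫ _ : ℝ, (0:ℝ) := integral_congr_ae (Filter.Eventually.of_forall step4)
    _ = 0 := integral_zero _ _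
end
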